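/- arXiv:1503.05735 — 2 statements merged into one kernel-verified Lean document; each statement's English description precedes it below -/
import Mathlib

section
/- Let G be a finite connected graph with n vertices, α > 0, and let Q^(ℓ) denote the generator of the symmetric exclusion process with ℓ black marbles and rate α. Let m < ℓ and let ψ^(m) be an eigenvector of -Q^(m) with eigenvalue λ. Define ψ on configurations x with ℓ black marbles by ψ(x) = Σ_{y ≤ x, ||y|| = m} ψ^(m)(y), where the sum is over all configurations y with m black marbles satisfying y(v) ≤ x(v) for all v. Then -Q^(ℓ) ψ = λ ψ; in particular, ψ is either identically zero or an eigenvector of -Q^(ℓ) with eigenvalue λ. -/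
open Finset

/-- Swap the values of a configuration at two vertices. -/
def swapAt {V : Type*} [DecidableEq V] (x : V → Bool) (u v : V) : V → Bool :=
  fun w => if w = u then x v else if w = v then x u else x w

/-- Number of black marbles (`true` coordinates) of a configuration. -/
def countB {V : Type*} [Fintype V] (x : V → Bool) : ℕ :=
  (Finset.univ.filter fun v => x v = true).card

/-- The negative generator `-Q` of the symmetric exclusion process on `G` with rate `α`:
`(-Qf)(x) = α Σ_{e ∈ E(G)} (f x - f x_e)`, written as half the sum over ordered adjacent pairs. -/
noncomputable def negGen {V : Type*} [Fintype V] [DecidableEq V] (G : SimpleGraph V) [DecidableRel G.Adj]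
    (α : ℝ) (f : (V → Bool) → ℝ) (x : V → Bool) : ℝ :=
  (α / 2) * ∑ u : V, ∑ v : V, if G.Adj u v then f x - f (swapAt x u v) else 0

/-- `ψ_+(x) = Σ_{v : x(v)=0} ψ(x_v)`, adding a black marble at `v`. -/
def plusOp {V : Type*} [Fintype V] [DecidableEq V] (ψ : (V → Bool) → ℝ) (x : V → Bool) : ℝ :=
  ∑ v ∈ Finset.univ.filter (fun v => x v = false), ψ (Function.update x v true)

/-- `ψ_-(x) = Σ_{v : x(v)=1} ψ(x_v)`, removing the black marble at `v`. -/
def minusOp {V : Type*} [Fintype V] [DecidableEq V] (ψ : (V → Bool) → ℝ) (x : V → Bool) : ℝ :=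
  ∑ v ∈ Finset.univ.filter (fun v => x v = true), ψ (Function.update x v false)

/-- Inner product at level `ℓ` with respect to the uniform measure on `ℓ`-subsets. -/
noncomputable def innerL {V : Type*} [Fintype V] [DecidableEq V] (ℓ : ℕ) (f g : (V → Bool) → ℝ) : ℝ :=
  (((Fintype.card V).choose ℓ : ℝ))⁻¹ *
    ∑ x ∈ Finset.univ.filter (fun x : V → Bool => countB x = ℓ), f x * g x

/-- Inner product on the full configuration space with respect to the uniform measure. -/
noncomputable def innerF {V : Type*} [Fintype V] [DecidableEq V] (f g : (V → Bool) → ℝ) : ℝ :=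
  ((2 : ℝ) ^ (Fintype.card V))⁻¹ * ∑ x : V → Bool, f x * g x


/-- `multiLift m ψ x = Σ_{y ≤ x, ‖y‖ = m} ψ(y)`. -/
noncomputable def multiLift {V : Type*} [Fintype V] [DecidableEq V] (m : ℕ)
    (ψ : (V → Bool) → ℝ) (x : V → Bool) : ℝ :=
  ∑ y ∈ Finset.univ.filter
      (fun y : V → Bool => countB y = m ∧ ∀ v, y v = true → x v = true), ψ y

/-! The lift `ψ ↦ Σ_{y ≤ x, ‖y‖ = m} ψ(y)` commutes with every transposition of vertices,
since `y ≤ x ↔ y ∘ τ ≤ x ∘ τ` and `‖y ∘ τ‖ = ‖y‖`. The generator is a linear combination of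
such transpositions, so it commutes with the lift, and the eigen-equation at level `m` lifts
term by term to level `ℓ`. -/

section Configurations

variable {V : Type*} [DecidableEq V]

lemma swapAt_eq_comp (x : V → Bool) (u v : V) : swapAt x u v = x ∘ Equiv.swap u v := by
  funext w
  simp only [swapAt, Function.comp, Equiv.swap_apply_def]
  split_ifs <;> simp_all

@[simp]
lemma swapAt_swapAt (x : V → Bool) (u v : V) : swapAt (swapAt x u v) u v = x := by
  funext w
  simp [swapAt_eq_comp]

lemma swapAt_le_swapAt {x y : V → Bool} (u v : V) (h : ∀ w, y w = true → x w = true) :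
    ∀ w, swapAt y u v w = true → swapAt x u v w = true := by
  intro w
  simp only [swapAt]
  split_ifs <;> exact h _

lemma countB_swapAt [Fintype V] (x : V → Bool) (u v : V) :
    countB (swapAt x u v) = countB x := by
  rw [swapAt_eq_comp, countB, countB]
  refine Finset.card_equiv (Equiv.swap u v) fun w => ?_
  simp only [Finset.mem_filter, Finset.mem_univ, true_and, Function.comp_apply]

end Configurations

section MultiLift

variable {V : Type*} [Fintype V] [DecidableEq V]

lemma multiLift_swapAt (m : ℕ) (ψ : (V → Bool) → ℝ) (x : V → Bool) (u v : V) :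
    multiLift m ψ (swapAt x u v) = multiLift m (fun y => ψ (swapAt y u v)) x := by
  refine Finset.sum_nbij' (swapAt · u v) (swapAt · u v) ?_ ?_ (by simp) (by simp) (by simp)
  · intro y hy
    simp only [Finset.mem_filter, Finset.mem_univ, true_and] at hy ⊢
    refine ⟨(countB_swapAt y u v).trans hy.1, fun w hw => ?_⟩
    simpa using swapAt_le_swapAt u v hy.2 w hw
  · intro y hy
    simp only [Finset.mem_filter, Finset.mem_univ, true_and] at hy ⊢
    exact ⟨(countB_swapAt y u v).trans hy.1, swapAt_le_swapAt u v hy.2⟩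

lemma multiLift_congr {m : ℕ} {ψ φ : (V → Bool) → ℝ} (h : ∀ y, countB y = m → ψ y = φ y)
    (x : V → Bool) : multiLift m ψ x = multiLift m φ x :=
  Finset.sum_congr rfl fun y hy => h y (Finset.mem_filter.mp hy).2.1

lemma multiLift_const_mul (m : ℕ) (c : ℝ) (ψ : (V → Bool) → ℝ) (x : V → Bool) :
    multiLift m (fun y => c * ψ y) x = c * multiLift m ψ x :=
  (Finset.mul_sum _ _ _).symm

lemma negGen_multiLift (G : SimpleGraph V) [DecidableRel G.Adj] (α : ℝ) (m : ℕ)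
    (ψ : (V → Bool) → ℝ) (x : V → Bool) :
    negGen G α (multiLift m ψ) x = multiLift m (negGen G α ψ) x := by
  have edge_term (u v : V) :
      (if G.Adj u v then multiLift m ψ x - multiLift m ψ (swapAt x u v) else 0) =
        multiLift m (fun y => if G.Adj u v then ψ y - ψ (swapAt y u v) else 0) x := by
    split_ifs
    · rw [multiLift_swapAt, multiLift, multiLift, multiLift, ← Finset.sum_sub_distrib]
    · exact Finset.sum_const_zero.symm
  unfold negGen
  rw [multiLift_const_mul]
  simp only [edge_term]
  congr 1
  simp only [multiLift]
  exact (Finset.sum_congr rfl fun u _ => Finset.sum_comm).trans Finset.sum_comm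

end MultiLift

theorem multiLift_is_eigenvector_general {V : Type*} [Fintype V] [DecidableEq V]
    (G : SimpleGraph V) [DecidableRel G.Adj]
    (α : ℝ) (m ℓ : ℕ)
    (ψ : (V → Bool) → ℝ) (lam : ℝ)
    (heig : ∀ x, countB x = m → negGen G α ψ x = lam * ψ x) :
    ∀ x, countB x = ℓ → negGen G α (multiLift m ψ) x = lam * multiLift m ψ x := by
  intro x _
  rw [negGen_multiLift, multiLift_congr heig, multiLift_const_mul]

/-- If ψ is an eigenvector of -Q^(m) with eigenvalue λ and m < ℓ, then
x ↦ Σ_{y ≤ x, ‖y‖=m} ψ(y) satisfies -Q^(ℓ) ψ = λ ψ at level ℓ. -/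
theorem multiLift_is_eigenvector {V : Type*} [Fintype V] [DecidableEq V]
    (G : SimpleGraph V) [DecidableRel G.Adj] (hG : G.Connected)
    (α : ℝ) (hα : 0 < α) (m ℓ : ℕ) (hmℓ : m < ℓ) (hℓ : ℓ ≤ Fintype.card V)
    (ψ : (V → Bool) → ℝ) (lam : ℝ)
    (hψ : ∃ x, countB x = m ∧ ψ x ≠ 0)
    (heig : ∀ x, countB x = m → negGen G α ψ x = lam * ψ x) :
    ∀ x, countB x = ℓ → negGen G α (multiLift m ψ) x = lam * multiLift m ψ x :=
  multiLift_is_eigenvector_general G α m ℓ ψ lam heig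
end

section
/- Let n ≥ 1, α > 0, and let Q_n^(ℓ) be the generator of the symmetric exclusion process on the complete graph K_n with ℓ black marbles and rate α. If ψ is an eigenvector of -Q_n^(ℓ) with eigenvalue λ, then ⟨ψ_+, ψ_+⟩ = ((n-ℓ+1)/(αℓ)) · (αℓ(n-ℓ+1) - λ) · ⟨ψ, ψ⟩, where ψ_+(x) = Σ_{v : x(v)=0} ψ(x_v) for configurations x with ℓ-1 black marbles, and ⟨·,·⟩ denotes the inner product with respect to the uniform measure on the corresponding configuration space. -/
open Finset

section Aux
variable {V : Type*} [Fintype V] [DecidableEq V]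

omit [Fintype V] in
lemma swapAt_comm (x : V → Bool) (u v : V) : swapAt x u v = swapAt x v u := by
  funext w; unfold swapAt; split_ifs <;> simp_all

omit [Fintype V] in
lemma swapAt_self (x : V → Bool) (u v : V) (h : x u = x v) : swapAt x u v = x := by
  funext w; unfold swapAt; split_ifs <;> simp_all

lemma countB_update_true (x : V → Bool) (v : V) (h : x v = false) :
    countB (Function.update x v true) = countB x + 1 := by
  unfold countB
  have hset : (univ.filter fun w => Function.update x v true w = true)
      = insert v (univ.filter fun w => x w = true) := by
    ext w
    by_cases hw : w = v <;> simp [hw, Function.update_apply]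
  rw [hset, card_insert_of_notMem (by simp [h])]

lemma countB_update_false (x : V → Bool) (v : V) (h : x v = true) :
    countB (Function.update x v false) + 1 = countB x := by
  unfold countB
  have hset : (univ.filter fun w => Function.update x v false w = true)
      = (univ.filter fun w => x w = true).erase v := by
    ext w
    by_cases hw : w = v <;> simp [hw, Function.update_apply]
  rw [hset, card_erase_add_one (by simp [h])]

omit [Fintype V] in
lemma update_update_eq_swapAt (y : V → Bool) (v w : V) (hv : y v = true) (hw : y w = false) :
    Function.update (Function.update y v false) w true = swapAt y v w := by
  have hvw : v ≠ w := fun h => by rw [h, hw] at hv; exact Bool.noConfusion hv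
  funext z
  unfold swapAt
  by_cases h1 : z = v <;> by_cases h2 : z = w <;>
    simp [h1, h2, Function.update_apply, hvw, hv, hw, Ne.symm hvw]

lemma adjoint_sum (m : ℕ) (f g : (V → Bool) → ℝ) :
    ∑ x ∈ univ.filter (fun x : V → Bool => countB x = m), plusOp f x * g x
      = ∑ y ∈ univ.filter (fun y : V → Bool => countB y = m + 1), f y * minusOp g y := by
  have L : ∑ x ∈ univ.filter (fun x : V → Bool => countB x = m), plusOp f x * g x
      = ∑ p ∈ (univ.filter (fun x : V → Bool => countB x = m)).sigma
          (fun x => univ.filter (fun v => x v = false)),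
          f (Function.update p.1 p.2 true) * g p.1 := by
    rw [Finset.sum_sigma]
    refine Finset.sum_congr rfl fun x hx => ?_
    rw [plusOp, Finset.sum_mul]
  have R : ∑ y ∈ univ.filter (fun y : V → Bool => countB y = m + 1), f y * minusOp g y
      = ∑ q ∈ (univ.filter (fun y : V → Bool => countB y = m + 1)).sigma
          (fun y => univ.filter (fun v => y v = true)),
          f q.1 * g (Function.update q.1 q.2 false) := by
    rw [Finset.sum_sigma]
    refine Finset.sum_congr rfl fun y hy => ?_
    rw [minusOp, Finset.mul_sum]
  rw [L, R]
  refine Finset.sum_nbij' (fun p => ⟨Function.update p.1 p.2 true, p.2⟩)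
    (fun q => ⟨Function.update q.1 q.2 false, q.2⟩) ?_ ?_ ?_ ?_ ?_
  · rintro ⟨x, v⟩ hp
    simp only [Finset.mem_sigma, Finset.mem_filter, Finset.mem_univ, true_and] at hp ⊢
    exact ⟨by rw [countB_update_true x v hp.2, hp.1], by simp⟩
  · rintro ⟨y, v⟩ hq
    simp only [Finset.mem_sigma, Finset.mem_filter, Finset.mem_univ, true_and] at hq ⊢
    refine ⟨?_, by simp⟩
    have := countB_update_false y v hq.2
    omega
  · rintro ⟨x, v⟩ hp
    simp only [Finset.mem_sigma, Finset.mem_filter, Finset.mem_univ, true_and] at hp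
    simp [Function.update_idem, Function.update_eq_self_iff, hp.2]
  · rintro ⟨y, v⟩ hq
    simp only [Finset.mem_sigma, Finset.mem_filter, Finset.mem_univ, true_and] at hq
    simp [Function.update_idem, Function.update_eq_self_iff, hq.2]
  · rintro ⟨x, v⟩ hp
    simp only [Finset.mem_sigma, Finset.mem_filter, Finset.mem_univ, true_and] at hp
    have hx : Function.update (Function.update x v true) v false = x := by
      rw [Function.update_idem]; exact Function.update_eq_self_iff.mpr hp.2.symm
    rw [hx]

lemma negGen_top_eq (α : ℝ) (ψ : (V → Bool) → ℝ) (y : V → Bool) :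
    negGen (⊤ : SimpleGraph V) α ψ y
      = α * (((univ.filter fun v => y v = true).card : ℝ)
              * ((univ.filter fun v => y v = false).card : ℝ) * ψ y
            - ∑ v ∈ univ.filter (fun v => y v = true),
                ∑ w ∈ univ.filter (fun w => y w = false), ψ (swapAt y v w)) := by
  unfold negGen
  have step1 : ∀ u v : V,
      (if (⊤ : SimpleGraph V).Adj u v then ψ y - ψ (swapAt y u v) else 0)
        = (if y u ≠ y v then ψ y - ψ (swapAt y u v) else 0) := by
    intro u v
    by_cases h : y u = y v
    · simp only [h, ne_eq, not_true_eq_false, if_false, SimpleGraph.top_adj]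
      by_cases huv : u = v
      · simp [huv]
      · simp [huv, swapAt_self y u v h]
    · have huv : u ≠ v := fun e => h (by rw [e])
      simp [SimpleGraph.top_adj, huv, h]
  simp only [step1]
  have split : ∀ F : V → V → ℝ,
      (∑ u : V, ∑ v : V, if y u ≠ y v then F u v else 0)
        = (∑ u ∈ univ.filter (fun u => y u = true),
             ∑ v ∈ univ.filter (fun v => y v = false), F u v)
          + (∑ u ∈ univ.filter (fun u => y u = false),
             ∑ v ∈ univ.filter (fun v => y v = true), F u v) := by
    intro F
    rw [← Finset.sum_filter_add_sum_filter_not univ (fun u => y u = true)]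
    congr 1
    · refine Finset.sum_congr rfl fun u hu => ?_
      simp only [mem_filter, mem_univ, true_and] at hu
      rw [Finset.sum_filter]
      refine Finset.sum_congr rfl fun v _ => ?_
      cases h : y v <;> simp [hu, h]
    · have hset : univ.filter (fun u => ¬ y u = true) = univ.filter (fun u => y u = false) := by
        ext u; simp
      rw [hset]
      refine Finset.sum_congr rfl fun u hu => ?_
      simp only [mem_filter, mem_univ, true_and] at hu
      rw [Finset.sum_filter]
      refine Finset.sum_congr rfl fun v _ => ?_
      cases h : y v <;> simp [hu, h]
  rw [split]
  have comm2 : (∑ u ∈ univ.filter (fun u => y u = false),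
                ∑ v ∈ univ.filter (fun v => y v = true), (ψ y - ψ (swapAt y u v)))
      = ∑ u ∈ univ.filter (fun u => y u = true),
          ∑ v ∈ univ.filter (fun v => y v = false), (ψ y - ψ (swapAt y u v)) := by
    rw [Finset.sum_comm]
    refine Finset.sum_congr rfl fun u _ => Finset.sum_congr rfl fun v _ => ?_
    rw [swapAt_comm]
  rw [comm2]
  rw [show ∀ a : ℝ, a + a = 2 * a from fun a => by ring]
  simp only [Finset.sum_sub_distrib, Finset.sum_const, smul_eq_mul]
  ring

lemma minus_plus (ψ : (V → Bool) → ℝ) (y : V → Bool) :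
    minusOp (plusOp ψ) y
      = ((univ.filter fun v => y v = true).card : ℝ) * ψ y
        + ∑ v ∈ univ.filter (fun v => y v = true),
            ∑ w ∈ univ.filter (fun w => y w = false), ψ (swapAt y v w) := by
  unfold minusOp
  have hterm : ∀ v ∈ univ.filter (fun v => y v = true),
      plusOp ψ (Function.update y v false)
        = ψ y + ∑ w ∈ univ.filter (fun w => y w = false), ψ (swapAt y v w) := by
    intro v hv
    simp only [mem_filter, mem_univ, true_and] at hv
    unfold plusOp
    have hset : (univ.filter fun w => Function.update y v false w = false)
        = insert v (univ.filter fun w => y w = false) := by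
      ext w
      by_cases hw : w = v <;> simp [hw, Function.update_apply, hv]
    rw [hset, Finset.sum_insert (by simp [hv])]
    congr 1
    · rw [Function.update_idem]
      congr 1
      exact Function.update_eq_self_iff.mpr hv.symm
    · refine Finset.sum_congr rfl fun w hw => ?_
      simp only [mem_filter, mem_univ, true_and] at hw
      rw [update_update_eq_swapAt y v w hv hw]
  rw [Finset.sum_congr rfl hterm, Finset.sum_add_distrib, Finset.sum_const]
  simp [mul_comm]

lemma coef_identity (n ℓ : ℕ) (α lam C1 C0 : ℝ) (hαne : α ≠ 0) (hℓR : (ℓ:ℝ) ≠ 0)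
    (hℓnR : (ℓ:ℝ) ≤ (n:ℝ)) (hC1 : C1 ≠ 0)
    (hC : C1 * (ℓ : ℝ) = C0 * ((n : ℝ) - ℓ + 1)) :
    C0⁻¹ * ((ℓ : ℝ) * ((n : ℝ) - ℓ + 1) - lam / α)
      = (((n : ℝ) - ℓ + 1) / (α * ℓ)) * (α * ℓ * ((n : ℝ) - ℓ + 1) - lam) * C1⁻¹ := by
  have hpos : (0:ℝ) < (n : ℝ) - ℓ + 1 := by linarith
  have hC0eq : C0 = C1 * (ℓ:ℝ) / ((n : ℝ) - ℓ + 1) := by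
    field_simp
    linarith [hC]
  subst hC0eq
  rw [div_eq_mul_inv, mul_inv, mul_inv, inv_inv]
  field_simp

end Aux

/-- On the complete graph K_n, ⟨ψ₊, ψ₊⟩ = ((n-ℓ+1)/(αℓ))·(αℓ(n-ℓ+1) - λ)·⟨ψ, ψ⟩. -/
theorem plusOp_length {n : ℕ} (hn : 1 ≤ n) (ℓ : ℕ) (hℓ1 : 1 ≤ ℓ) (hℓn : ℓ ≤ n)
    (α : ℝ) (hα : 0 < α)
    (ψ : (Fin n → Bool) → ℝ) (lam : ℝ)
    (hψ : ∃ x, countB x = ℓ ∧ ψ x ≠ 0)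
    (heig : ∀ x, countB x = ℓ →
      negGen (⊤ : SimpleGraph (Fin n)) α ψ x = lam * ψ x) :
    innerL (ℓ - 1) (plusOp ψ) (plusOp ψ)
      = (((n : ℝ) - ℓ + 1) / (α * ℓ)) * (α * ℓ * ((n : ℝ) - ℓ + 1) - lam)
          * innerL ℓ ψ ψ := by
  classical
  have hαne : α ≠ 0 := ne_of_gt hα
  have hℓR : (ℓ : ℝ) ≠ 0 := Nat.cast_ne_zero.mpr (by omega)
  have hℓnR : (ℓ : ℝ) ≤ (n : ℝ) := Nat.cast_le.mpr hℓn
  have hcardT : ∀ y : Fin n → Bool, countB y = ℓ →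
      ((univ.filter fun v => y v = true).card : ℝ) = (ℓ : ℝ) := by
    intro y hy
    have : (univ.filter fun v => y v = true).card = ℓ := hy
    exact_mod_cast congrArg (Nat.cast : ℕ → ℝ) this
  have hcardF : ∀ y : Fin n → Bool, countB y = ℓ →
      ((univ.filter fun v => y v = false).card : ℝ) = (n : ℝ) - (ℓ : ℝ) := by
    intro y hy
    have h1 := Finset.card_filter_add_card_filter_not
      (s := (univ : Finset (Fin n))) (p := fun v => y v = true)
    have hset : (univ.filter fun v : Fin n => ¬ y v = true)
        = univ.filter fun v => y v = false := by
      ext v; simp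
    rw [hset] at h1
    have h2 : (univ.filter fun v : Fin n => y v = true).card = ℓ := hy
    have h3 : (univ.filter fun v : Fin n => y v = false).card = n - ℓ := by
      simp only [Finset.card_univ, Fintype.card_fin] at h1
      omega
    rw [h3, Nat.cast_sub hℓn]
  -- key pointwise identity
  have key : ∀ y : Fin n → Bool, countB y = ℓ →
      minusOp (plusOp ψ) y
        = ((ℓ : ℝ) * ((n : ℝ) - ℓ + 1) - lam / α) * ψ y := by
    intro y hy
    have hg := negGen_top_eq α ψ y
    rw [heig y hy, hcardT y hy, hcardF y hy] at hg
    have hS : (∑ v ∈ univ.filter (fun v => y v = true),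
        ∑ w ∈ univ.filter (fun w => y w = false), ψ (swapAt y v w))
        = (ℓ : ℝ) * ((n : ℝ) - ℓ) * ψ y - lam / α * ψ y := by
      field_simp at hg ⊢
      linarith
    rw [minus_plus, hcardT y hy, hS]
    ring
  -- adjointness
  have hm : ℓ - 1 + 1 = ℓ := by omega
  have hadj := adjoint_sum (V := Fin n) (ℓ - 1) ψ (plusOp ψ)
  rw [hm] at hadj
  have hsum : (∑ y ∈ univ.filter (fun y : Fin n → Bool => countB y = ℓ),
        ψ y * minusOp (plusOp ψ) y)
      = ((ℓ : ℝ) * ((n : ℝ) - ℓ + 1) - lam / α)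
          * ∑ y ∈ univ.filter (fun y : Fin n → Bool => countB y = ℓ), ψ y * ψ y := by
    rw [Finset.mul_sum]
    refine Finset.sum_congr rfl fun y hy => ?_
    simp only [mem_filter, mem_univ, true_and] at hy
    rw [key y hy]
    ring
  unfold innerL
  simp only [Fintype.card_fin]
  rw [hadj, hsum]
  set Sq := ∑ y ∈ univ.filter (fun y : Fin n → Bool => countB y = ℓ), ψ y * ψ y with hSq
  -- choose identity
  have hCne : ((n.choose ℓ : ℕ) : ℝ) ≠ 0 :=
    Nat.cast_ne_zero.mpr (Nat.choose_pos hℓn).ne'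
  have hCne' : ((n.choose (ℓ - 1) : ℕ) : ℝ) ≠ 0 :=
    Nat.cast_ne_zero.mpr (Nat.choose_pos (by omega)).ne'
  have hC : ((n.choose ℓ : ℕ) : ℝ) * (ℓ : ℝ)
      = ((n.choose (ℓ - 1) : ℕ) : ℝ) * ((n : ℝ) - ℓ + 1) := by
    have h0 := Nat.choose_succ_right_eq n (ℓ - 1)
    rw [hm] at h0
    have h1 := congrArg (Nat.cast : ℕ → ℝ) h0
    push_cast [Nat.cast_sub (show ℓ - 1 ≤ n by omega), Nat.cast_sub hℓ1] at h1
    linarith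
  have hcoef : (((n.choose (ℓ - 1) : ℕ) : ℝ))⁻¹ * ((ℓ : ℝ) * ((n : ℝ) - ℓ + 1) - lam / α)
      = (((n : ℝ) - ℓ + 1) / (α * ℓ)) * (α * ℓ * ((n : ℝ) - ℓ + 1) - lam)
          * (((n.choose ℓ : ℕ) : ℝ))⁻¹ := by
    exact coef_identity n ℓ α lam _ _ hαne hℓR hℓnR hCne hC
  calc (((n.choose (ℓ - 1) : ℕ) : ℝ))⁻¹
        * (((ℓ : ℝ) * ((n : ℝ) - ℓ + 1) - lam / α) * Sq)
      = ((((n.choose (ℓ - 1) : ℕ) : ℝ))⁻¹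
          * ((ℓ : ℝ) * ((n : ℝ) - ℓ + 1) - lam / α)) * Sq := by ring
    _ = ((((n : ℝ) - ℓ + 1) / (α * ℓ)) * (α * ℓ * ((n : ℝ) - ℓ + 1) - lam)
          * (((n.choose ℓ : ℕ) : ℝ))⁻¹) * Sq := by rw [hcoef]
    _ = (((n : ℝ) - ℓ + 1) / (α * ℓ)) * (α * ℓ * ((n : ℝ) - ℓ + 1) - lam)
          * ((((n.choose ℓ : ℕ) : ℝ))⁻¹ * Sq) := by ring
end
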